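/- arXiv:2507.19191 — 10 statements merged into one kernel-verified Lean document; each statement's English description precedes it below -/
import Mathlib

section
/- For all real σ, τ > 0, the function f(σ,τ) = ((σ+1)³(τ+1)² + 3στ)/(στ) satisfies f(σ,τ) ≥ 30, with equality if and only if (σ,τ) = (1/2, 1). -/
/-- The trace of the figure-eight curve on the unipotent locus is at least 30,
with equality exactly at (σ, τ) = (1/2, 1). -/
theorem figure_eight_trace_min (σ τ : ℝ) (hσ : 0 < σ) (hτ : 0 < τ) :
    30 ≤ ((σ+1)^3 * (τ+1)^2 + 3*σ*τ) / (σ*τ) ∧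
    (((σ+1)^3 * (τ+1)^2 + 3*σ*τ) / (σ*τ) = 30 ↔ σ = 1/2 ∧ τ = 1) := by
  have hστ : 0 < σ * τ := mul_pos hσ hτ
  have key : ((σ+1)^3 * (τ+1)^2 + 3*σ*τ) - 30 * (σ*τ)
      = (τ+1)^2 * (2*σ-1)^2 * (σ+4)/4 + 27*σ/4 * (τ-1)^2 := by ring
  have h1 : 0 ≤ (τ+1)^2 * (2*σ-1)^2 * (σ+4)/4 := by positivity
  have h2 : 0 ≤ 27*σ/4 * (τ-1)^2 := by positivity
  constructor
  · rw [le_div_iff₀ hστ]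
    nlinarith [h1, h2]
  · rw [div_eq_iff hστ.ne']
    constructor
    · intro h
      have hsum : (τ+1)^2 * (2*σ-1)^2 * (σ+4)/4 + 27*σ/4 * (τ-1)^2 = 0 := by
        nlinarith [key]
      have hz1 : (τ+1)^2 * (2*σ-1)^2 * (σ+4)/4 = 0 := le_antisymm (by linarith) h1
      have hz2 : 27*σ/4 * (τ-1)^2 = 0 := le_antisymm (by linarith) h2
      have hτ1 : τ = 1 := by
        have : (τ-1)^2 = 0 := by
          rcases mul_eq_zero.mp hz2 with h | h
          · nlinarith
          · exact h
        nlinarith [sq_nonneg (τ-1)]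
      have hσ1 : σ = 1/2 := by
        have h4 : (0:ℝ) < σ + 4 := by linarith
        have hp : (0:ℝ) < (τ+1)^2 := by positivity
        have : (2*σ-1)^2 = 0 := by
          by_contra hne
          have : 0 < (2*σ-1)^2 := lt_of_le_of_ne (sq_nonneg _) (Ne.symm hne)
          nlinarith
        nlinarith [sq_nonneg (2*σ-1)]
      exact ⟨hσ1, hτ1⟩
    · rintro ⟨ha, hb⟩
      subst ha; subst hb; ring
end

section
/- The function g(u,v) = f(eᵘ, eᵛ), where f(σ,τ) = ((σ+1)³(τ+1)² + 3στ)/(στ), is strictly convex on ℝ²: its restriction to every non-constant affine line t ↦ (u₀ + bt, v₀ + ct) with (b,c) ≠ (0,0) is a strictly convex function of t. -/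
open Real Set


lemma expTerm_convexOn (d β α : ℝ) (hd : 0 ≤ d) :
    ConvexOn ℝ Set.univ (fun t : ℝ => d * Real.exp (β + α * t)) := by
  refine ⟨convex_univ, fun x _ y _ a a' ha ha' hab => ?_⟩
  simp only [smul_eq_mul]
  have harg : β + α * (a * x + a' * y) = a * (β + α * x) + a' * (β + α * y) := by
    linear_combination (-β) * hab
  rw [harg]
  have key := convexOn_exp.2 (Set.mem_univ (β + α * x)) (Set.mem_univ (β + α * y)) ha ha' hab
  simp only [smul_eq_mul] at key
  have := mul_le_mul_of_nonneg_left key hd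
  linarith

lemma expTerm_strictConvexOn (d β α : ℝ) (hd : 0 < d) (hα : α ≠ 0) :
    StrictConvexOn ℝ Set.univ (fun t : ℝ => d * Real.exp (β + α * t)) := by
  refine ⟨convex_univ, fun x _ y _ hxy a a' ha ha' hab => ?_⟩
  simp only [smul_eq_mul]
  have harg : β + α * (a * x + a' * y) = a * (β + α * x) + a' * (β + α * y) := by
    linear_combination (-β) * hab
  rw [harg]
  have hne : β + α * x ≠ β + α * y := by
    intro h
    exact hxy (mul_left_cancel₀ hα (by linarith))
  have key := strictConvexOn_exp.2 (Set.mem_univ (β + α * x)) (Set.mem_univ (β + α * y)) hne ha ha' hab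
  simp only [smul_eq_mul] at key
  have := mul_lt_mul_of_pos_left key hd
  linarith

/-- The trace of the figure-eight curve on the unipotent locus, written in
logarithmic coordinates g(u,v) = f(eᵘ, eᵛ), is strictly convex along every
non-constant affine line in ℝ² (i.e. along every mixed flow). -/
theorem figure_eight_trace_strictly_convex_along_lines
    (u₀ v₀ b c : ℝ) (hbc : ¬ (b = 0 ∧ c = 0)) :
    StrictConvexOn ℝ Set.univ (fun t : ℝ =>
      ((Real.exp (u₀ + b*t) + 1)^3 * (Real.exp (v₀ + c*t) + 1)^2
        + 3 * Real.exp (u₀ + b*t) * Real.exp (v₀ + c*t))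
        / (Real.exp (u₀ + b*t) * Real.exp (v₀ + c*t))) := by
  -- The "remainder" part: constant plus ten exponential terms, all convex
  have hC : ConvexOn ℝ Set.univ (fun t : ℝ =>
      (9 : ℝ)
      + 1 * Real.exp (-u₀ - v₀ + (-b - c) * t)
      + 2 * Real.exp (-u₀ + (-b) * t)
      + 1 * Real.exp (-u₀ + v₀ + (-b + c) * t)
      + 3 * Real.exp (-v₀ + (-c) * t)
      + 3 * Real.exp (u₀ - v₀ + (b - c) * t)
      + 3 * Real.exp (u₀ + v₀ + (b + c) * t)
      + 1 * Real.exp (2*u₀ - v₀ + (2*b - c) * t)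
      + 2 * Real.exp (2*u₀ + (2*b) * t)
      + 1 * Real.exp (2*u₀ + v₀ + (2*b + c) * t)) := by
    exact ((((((((convexOn_const 9 convex_univ).add
      (expTerm_convexOn 1 (-u₀ - v₀) (-b - c) (by norm_num))).add
      (expTerm_convexOn 2 (-u₀) (-b) (by norm_num))).add
      (expTerm_convexOn 1 (-u₀ + v₀) (-b + c) (by norm_num))).add
      (expTerm_convexOn 3 (-v₀) (-c) (by norm_num))).add
      (expTerm_convexOn 3 (u₀ - v₀) (b - c) (by norm_num))).add
      (expTerm_convexOn 3 (u₀ + v₀) (b + c) (by norm_num))).add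
      (expTerm_convexOn 1 (2*u₀ - v₀) (2*b - c) (by norm_num))).add
      (expTerm_convexOn 2 (2*u₀) (2*b) (by norm_num)) |>.add
      (expTerm_convexOn 1 (2*u₀ + v₀) (2*b + c) (by norm_num))
  have hG : StrictConvexOn ℝ Set.univ (fun t : ℝ =>
      ((9 : ℝ)
      + 1 * Real.exp (-u₀ - v₀ + (-b - c) * t)
      + 2 * Real.exp (-u₀ + (-b) * t)
      + 1 * Real.exp (-u₀ + v₀ + (-b + c) * t)
      + 3 * Real.exp (-v₀ + (-c) * t)
      + 3 * Real.exp (u₀ - v₀ + (b - c) * t)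
      + 3 * Real.exp (u₀ + v₀ + (b + c) * t)
      + 1 * Real.exp (2*u₀ - v₀ + (2*b - c) * t)
      + 2 * Real.exp (2*u₀ + (2*b) * t)
      + 1 * Real.exp (2*u₀ + v₀ + (2*b + c) * t))
      + 6 * Real.exp (u₀ + b * t) + 3 * Real.exp (v₀ + c * t)) := by
    by_cases hb : b = 0
    · have hc : c ≠ 0 := fun h => hbc ⟨hb, h⟩
      exact (hC.add (expTerm_convexOn 6 u₀ b (by norm_num))).add_strictConvexOn
        (expTerm_strictConvexOn 3 v₀ c (by norm_num) hc)
    · exact (hC.add_strictConvexOn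
        (expTerm_strictConvexOn 6 u₀ b (by norm_num) hb)).add_convexOn
        (expTerm_convexOn 3 v₀ c (by norm_num))
  have heq : (fun t : ℝ =>
      ((Real.exp (u₀ + b*t) + 1)^3 * (Real.exp (v₀ + c*t) + 1)^2
        + 3 * Real.exp (u₀ + b*t) * Real.exp (v₀ + c*t))
        / (Real.exp (u₀ + b*t) * Real.exp (v₀ + c*t)))
      = (fun t : ℝ =>
      ((9 : ℝ)
      + 1 * Real.exp (-u₀ - v₀ + (-b - c) * t)
      + 2 * Real.exp (-u₀ + (-b) * t)
      + 1 * Real.exp (-u₀ + v₀ + (-b + c) * t)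
      + 3 * Real.exp (-v₀ + (-c) * t)
      + 3 * Real.exp (u₀ - v₀ + (b - c) * t)
      + 3 * Real.exp (u₀ + v₀ + (b + c) * t)
      + 1 * Real.exp (2*u₀ - v₀ + (2*b - c) * t)
      + 2 * Real.exp (2*u₀ + (2*b) * t)
      + 1 * Real.exp (2*u₀ + v₀ + (2*b + c) * t))
      + 6 * Real.exp (u₀ + b * t) + 3 * Real.exp (v₀ + c * t)) := by
    funext t
    have h1 : Real.exp (-u₀ - v₀ + (-b - c) * t)
        = (Real.exp (u₀ + b*t))⁻¹ * (Real.exp (v₀ + c*t))⁻¹ := by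
      rw [show -u₀ - v₀ + (-b - c) * t = -(u₀ + b*t) + -(v₀ + c*t) by ring,
        Real.exp_add, Real.exp_neg, Real.exp_neg]
    have h2 : Real.exp (-u₀ + (-b) * t) = (Real.exp (u₀ + b*t))⁻¹ := by
      rw [show -u₀ + (-b) * t = -(u₀ + b*t) by ring, Real.exp_neg]
    have h3 : Real.exp (-u₀ + v₀ + (-b + c) * t)
        = (Real.exp (u₀ + b*t))⁻¹ * Real.exp (v₀ + c*t) := by
      rw [show -u₀ + v₀ + (-b + c) * t = -(u₀ + b*t) + (v₀ + c*t) by ring,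
        Real.exp_add, Real.exp_neg]
    have h4 : Real.exp (-v₀ + (-c) * t) = (Real.exp (v₀ + c*t))⁻¹ := by
      rw [show -v₀ + (-c) * t = -(v₀ + c*t) by ring, Real.exp_neg]
    have h5 : Real.exp (u₀ - v₀ + (b - c) * t)
        = Real.exp (u₀ + b*t) * (Real.exp (v₀ + c*t))⁻¹ := by
      rw [show u₀ - v₀ + (b - c) * t = (u₀ + b*t) + -(v₀ + c*t) by ring,
        Real.exp_add, Real.exp_neg]
    have h6 : Real.exp (u₀ + v₀ + (b + c) * t)
        = Real.exp (u₀ + b*t) * Real.exp (v₀ + c*t) := by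
      rw [show u₀ + v₀ + (b + c) * t = (u₀ + b*t) + (v₀ + c*t) by ring, Real.exp_add]
    have h7 : Real.exp (2*u₀ - v₀ + (2*b - c) * t)
        = Real.exp (u₀ + b*t) * Real.exp (u₀ + b*t) * (Real.exp (v₀ + c*t))⁻¹ := by
      rw [show 2*u₀ - v₀ + (2*b - c) * t = ((u₀ + b*t) + (u₀ + b*t)) + -(v₀ + c*t) by ring,
        Real.exp_add, Real.exp_add, Real.exp_neg]
    have h8 : Real.exp (2*u₀ + (2*b) * t)
        = Real.exp (u₀ + b*t) * Real.exp (u₀ + b*t) := by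
      rw [show 2*u₀ + (2*b) * t = (u₀ + b*t) + (u₀ + b*t) by ring, Real.exp_add]
    have h9 : Real.exp (2*u₀ + v₀ + (2*b + c) * t)
        = Real.exp (u₀ + b*t) * Real.exp (u₀ + b*t) * Real.exp (v₀ + c*t) := by
      rw [show 2*u₀ + v₀ + (2*b + c) * t = ((u₀ + b*t) + (u₀ + b*t)) + (v₀ + c*t) by ring,
        Real.exp_add, Real.exp_add]
    rw [h1, h2, h3, h4, h5, h6, h7, h8, h9]
    have hx : Real.exp (u₀ + b*t) ≠ 0 := Real.exp_ne_zero _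
    have hy : Real.exp (v₀ + c*t) ≠ 0 := Real.exp_ne_zero _
    field_simp
    ring
  rw [heq]
  exact hG
end

section
/- Let p(x,y) = Σₘ cₘ x^{aₘ} y^{bₘ} be a Laurent polynomial (finitely many terms, integer exponents) with all coefficients cₘ > 0, and suppose (0,0) lies in the interior of the convex hull of the exponent set {(aₘ, bₘ)}. Then the function q(u,v) = p(eᵘ, eᵛ) on ℝ² is: (1) strictly convex along every non-constant affine line; (2) proper (all sublevel sets are compact); and (3) attains a unique global minimum on ℝ². -/
set_option maxHeartbeats 1000000

open Real Finset

private lemma linmap_aux (u v : ℝ) : IsLinearMap ℝ (fun x : ℝ × ℝ => x.1 * u + x.2 * v) := by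
  constructor
  · intro x y; simp [add_mul]; ring
  · intro r x; simp [smul_eq_mul]; ring

private lemma key_bound {ι : Type*} [Fintype ι] [Nonempty ι] (A B : ι → ℤ) (ε : ℝ) (hε : 0 < ε)
    (hball : Metric.ball ((0:ℝ),(0:ℝ)) ε ⊆
      convexHull ℝ (Set.range fun i => ((A i : ℝ), (B i : ℝ))))
    (p : ℝ × ℝ) : ∃ i, ε / 2 * ‖p‖ ≤ (A i : ℝ) * p.1 + (B i : ℝ) * p.2 := by
  by_cases hp : p = 0
  · exact ⟨Classical.arbitrary ι, by simp [hp]⟩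
  have hn : 0 < ‖p‖ := norm_pos_iff.2 hp
  obtain ⟨i, -, hi⟩ := Finset.exists_mem_eq_sup' Finset.univ_nonempty
    (fun i => (A i : ℝ) * p.1 + (B i : ℝ) * p.2)
  set M := Finset.univ.sup' Finset.univ_nonempty
    (fun i => (A i : ℝ) * p.1 + (B i : ℝ) * p.2) with hM
  refine ⟨i, ?_⟩
  rw [← hi]
  have hsub : convexHull ℝ (Set.range fun i => ((A i : ℝ), (B i : ℝ))) ⊆
      {x : ℝ × ℝ | x.1 * p.1 + x.2 * p.2 ≤ M} := by
    apply convexHull_min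
    · rintro _ ⟨j, rfl⟩
      exact Finset.le_sup' (fun i => (A i : ℝ) * p.1 + (B i : ℝ) * p.2) (Finset.mem_univ j)
    · exact convex_halfSpace_le (linmap_aux p.1 p.2) M
  set z : ℝ × ℝ := ((ε / 2) / ‖p‖) • p with hz
  have hzball : z ∈ Metric.ball ((0:ℝ),(0:ℝ)) ε := by
    have : ‖z‖ = ε / 2 := by
      rw [hz, norm_smul, Real.norm_eq_abs, abs_of_pos (by positivity)]
      field_simp
    show z ∈ Metric.ball (0 : ℝ × ℝ) ε
    rw [Metric.mem_ball, dist_zero_right, this]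
    linarith
  have hzM : z.1 * p.1 + z.2 * p.2 ≤ M := hsub (hball hzball)
  have hz1 : z.1 = ((ε / 2) / ‖p‖) * p.1 := rfl
  have hz2 : z.2 = ((ε / 2) / ‖p‖) * p.2 := rfl
  have hsq : ‖p‖ ^ 2 ≤ p.1 ^ 2 + p.2 ^ 2 := by
    have h1 : ‖p‖ = max ‖p.1‖ ‖p.2‖ := rfl
    rcases max_cases ‖p.1‖ ‖p.2‖ with ⟨h, -⟩ | ⟨h, -⟩ <;>
      rw [h1, h] <;> rw [Real.norm_eq_abs, sq_abs] <;> nlinarith [sq_nonneg p.1, sq_nonneg p.2]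
  have key : ε / 2 * ‖p‖ ≤ z.1 * p.1 + z.2 * p.2 := by
    rw [hz1, hz2]
    have : ((ε / 2) / ‖p‖) * (p.1 ^ 2 + p.2 ^ 2) ≥ ((ε / 2) / ‖p‖) * ‖p‖ ^ 2 :=
      mul_le_mul_of_nonneg_left hsq (by positivity)
    calc ε / 2 * ‖p‖ = ((ε / 2) / ‖p‖) * ‖p‖ ^ 2 := by field_simp
      _ ≤ ((ε / 2) / ‖p‖) * (p.1 ^ 2 + p.2 ^ 2) := this
      _ = ((ε / 2) / ‖p‖) * p.1 * p.1 + ((ε / 2) / ‖p‖) * p.2 * p.2 := by ring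
  linarith

/-- A Laurent polynomial with positive coefficients whose Newton polygon
contains the origin in its interior becomes, in logarithmic coordinates,
a function that is strictly convex along every non-constant affine line,
proper, and attains a unique global minimum. -/
theorem laurent_positive_newton_interior_convex_proper_min
    (ι : Type*) [Fintype ι] (c : ι → ℝ) (A B : ι → ℤ)
    (hc : ∀ i, 0 < c i)
    (hhull : ((0 : ℝ), (0 : ℝ)) ∈
      interior (convexHull ℝ (Set.range fun i => ((A i : ℝ), (B i : ℝ)))))
    (q : ℝ × ℝ → ℝ)
    (hq : ∀ p : ℝ × ℝ, q p = ∑ i, c i * Real.exp ((A i : ℝ) * p.1 + (B i : ℝ) * p.2)) :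
    (∀ u₀ v₀ b d : ℝ, ¬ (b = 0 ∧ d = 0) →
        StrictConvexOn ℝ Set.univ (fun t : ℝ => q (u₀ + b*t, v₀ + d*t))) ∧
    (∀ C : ℝ, IsCompact {p : ℝ × ℝ | q p ≤ C}) ∧
    (∃! p₀ : ℝ × ℝ, ∀ p, q p₀ ≤ q p) := by
  -- ι is nonempty
  have hιne : Nonempty ι := by
    rcases isEmpty_or_nonempty ι with h | h
    · exfalso
      rw [Set.range_eq_empty, convexHull_empty, interior_empty] at hhull
      exact hhull
    · exact h
  -- extract the ball inside the hull
  obtain ⟨ε, hε, hball⟩ := Metric.isOpen_iff.1 isOpen_interior _ hhull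
  have hball' : Metric.ball ((0:ℝ),(0:ℝ)) ε ⊆
      convexHull ℝ (Set.range fun i => ((A i : ℝ), (B i : ℝ))) :=
    hball.trans interior_subset
  -- rewrite q
  have hqe : q = fun p : ℝ × ℝ => ∑ i, c i * Real.exp ((A i : ℝ) * p.1 + (B i : ℝ) * p.2) :=
    funext hq
  have hqcont : Continuous q := by
    rw [hqe]
    exact continuous_finset_sum _ fun i _ => continuous_const.mul
      (Real.continuous_exp.comp
        ((continuous_const.mul continuous_fst).add (continuous_const.mul continuous_snd)))
  -- Part 1: strict convexity along lines
  have part1 : ∀ u₀ v₀ b d : ℝ, ¬ (b = 0 ∧ d = 0) →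
      StrictConvexOn ℝ Set.univ (fun t : ℝ => q (u₀ + b*t, v₀ + d*t)) := by
    intro u₀ v₀ bb dd hbd
    simp only [hqe]
    have hne : (bb, dd) ≠ (0 : ℝ × ℝ) := by
      intro h
      exact hbd ⟨congrArg Prod.fst h, congrArg Prod.snd h⟩
    obtain ⟨i₀, hi₀⟩ := key_bound A B ε hε hball' (bb, dd)
    have hβ : 0 < (A i₀ : ℝ) * bb + (B i₀ : ℝ) * dd := by
      have : 0 < ε / 2 * ‖((bb, dd) : ℝ × ℝ)‖ := mul_pos (half_pos hε) (norm_pos_iff.2 hne)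
      exact lt_of_lt_of_le this hi₀
    refine ⟨convex_univ, fun x _ y _ hxy a b ha hb hab => ?_⟩
    simp only [smul_eq_mul]
    set s : ι → ℝ := fun i => (A i : ℝ) * (u₀ + bb*x) + (B i : ℝ) * (v₀ + dd*x) with hs
    set t : ι → ℝ := fun i => (A i : ℝ) * (u₀ + bb*y) + (B i : ℝ) * (v₀ + dd*y) with ht
    have hexp : ∀ i, (A i : ℝ) * (u₀ + bb*(a*x+b*y)) + (B i : ℝ) * (v₀ + dd*(a*x+b*y))
        = a * s i + b * t i := by
      intro i
      have hb1 : b = 1 - a := by linarith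
      rw [hs, ht]; simp only; rw [hb1]; ring
    have hle : ∀ i ∈ Finset.univ,
        c i * Real.exp ((A i : ℝ) * (u₀ + bb*(a*x+b*y)) + (B i : ℝ) * (v₀ + dd*(a*x+b*y)))
        ≤ a * (c i * Real.exp (s i)) + b * (c i * Real.exp (t i)) := by
      intro i _
      rw [hexp i]
      have := convexOn_exp.2 (Set.mem_univ (s i)) (Set.mem_univ (t i)) ha.le hb.le hab
      simp only [smul_eq_mul] at this
      nlinarith [(hc i).le, Real.exp_pos (a * s i + b * t i)]
    have hlt : c i₀ * Real.exp ((A i₀ : ℝ) * (u₀ + bb*(a*x+b*y)) + (B i₀ : ℝ) * (v₀ + dd*(a*x+b*y)))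
        < a * (c i₀ * Real.exp (s i₀)) + b * (c i₀ * Real.exp (t i₀)) := by
      rw [hexp i₀]
      have hst : s i₀ ≠ t i₀ := by
        rw [hs, ht]
        simp only
        intro h
        have : ((A i₀ : ℝ) * bb + (B i₀ : ℝ) * dd) * (x - y) = 0 := by linarith [h]
        rcases mul_eq_zero.1 this with h' | h'
        · linarith
        · exact hxy (by linarith)
      have := strictConvexOn_exp.2 (Set.mem_univ (s i₀)) (Set.mem_univ (t i₀)) hst ha hb hab
      simp only [smul_eq_mul] at this
      nlinarith [hc i₀]
    calc ∑ i, c i * Real.exp ((A i : ℝ) * (u₀ + bb*(a*x+b*y)) + (B i : ℝ) * (v₀ + dd*(a*x+b*y)))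
        < ∑ i, (a * (c i * Real.exp (s i)) + b * (c i * Real.exp (t i))) :=
          Finset.sum_lt_sum hle ⟨i₀, Finset.mem_univ i₀, hlt⟩
      _ = a * ∑ i, c i * Real.exp (s i) + b * ∑ i, c i * Real.exp (t i) := by
          rw [Finset.sum_add_distrib, ← Finset.mul_sum, ← Finset.mul_sum]
  -- lower bound on q
  set cmin := Finset.univ.inf' Finset.univ_nonempty c with hcmin
  have hcminpos : 0 < cmin := by
    rw [hcmin, Finset.lt_inf'_iff]
    exact fun i _ => hc i
  have hlower : ∀ p : ℝ × ℝ, cmin * Real.exp (ε / 2 * ‖p‖) ≤ q p := by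
    intro p
    obtain ⟨i, hi⟩ := key_bound A B ε hε hball' p
    rw [hq]
    calc cmin * Real.exp (ε / 2 * ‖p‖)
        ≤ c i * Real.exp ((A i : ℝ) * p.1 + (B i : ℝ) * p.2) := by
          apply mul_le_mul (Finset.inf'_le c (Finset.mem_univ i)) (Real.exp_le_exp.2 hi)
            (Real.exp_pos _).le (hc i).le
      _ ≤ ∑ j, c j * Real.exp ((A j : ℝ) * p.1 + (B j : ℝ) * p.2) :=
          Finset.single_le_sum (f := fun j => c j * Real.exp ((A j : ℝ) * p.1 + (B j : ℝ) * p.2))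
            (fun j _ => (mul_pos (hc j) (Real.exp_pos _)).le) (Finset.mem_univ i)
  -- Part 2: compact sublevel sets
  have part2 : ∀ C : ℝ, IsCompact {p : ℝ × ℝ | q p ≤ C} := by
    intro C
    have hclosed : IsClosed {p : ℝ × ℝ | q p ≤ C} := isClosed_le hqcont continuous_const
    by_cases hCpos : 0 < C / cmin
    · set R := max 1 (Real.log (C / cmin) / (ε / 2)) with hR
      apply (isCompact_closedBall (0 : ℝ × ℝ) R).of_isClosed_subset hclosed
      intro p hp
      simp only [Set.mem_setOf_eq] at hp
      have h1 : cmin * Real.exp (ε / 2 * ‖p‖) ≤ C := le_trans (hlower p) hp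
      have h2 : Real.exp (ε / 2 * ‖p‖) ≤ C / cmin := by
        rw [le_div_iff₀ hcminpos]; linarith [h1]
      have h3 : ε / 2 * ‖p‖ ≤ Real.log (C / cmin) :=
        (Real.le_log_iff_exp_le hCpos).2 h2
      have h4 : ‖p‖ ≤ Real.log (C / cmin) / (ε / 2) := by
        rw [le_div_iff₀ (half_pos hε)]; linarith
      rw [Metric.mem_closedBall, dist_zero_right]
      exact h4.trans (le_max_right _ _)
    · convert isCompact_empty
      rw [Set.eq_empty_iff_forall_notMem]
      intro p hp
      simp only [Set.mem_setOf_eq] at hp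
      have := hlower p
      have hqp : 0 < q p := lt_of_lt_of_le (mul_pos hcminpos (Real.exp_pos _)) this
      have hC : C ≤ 0 := by
        by_contra h
        exact hCpos (div_pos (lt_of_not_ge h) hcminpos)
      linarith
  refine ⟨part1, part2, ?_⟩
  -- Part 3: unique minimum
  have hS : IsCompact {p : ℝ × ℝ | q p ≤ q (0, 0)} := part2 _
  have hSne : ((0:ℝ), (0:ℝ)) ∈ {p : ℝ × ℝ | q p ≤ q (0, 0)} := by
    simp only [Set.mem_setOf_eq]; exact le_refl _
  obtain ⟨p₀, hp₀S, hp₀min⟩ := hS.exists_isMinOn ⟨_, hSne⟩ (hqcont.continuousOn)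
  have hglobal : ∀ p, q p₀ ≤ q p := by
    intro p
    by_cases hp : q p ≤ q (0, 0)
    · exact hp₀min hp
    · exact le_trans (hp₀min hSne) (le_of_not_ge hp)
  refine ⟨p₀, hglobal, ?_⟩
  intro p₁ hp₁
  by_contra hne
  have hqeq : q p₁ = q p₀ := le_antisymm (hp₁ p₀) (hglobal p₁)
  set bb := p₁.1 - p₀.1 with hbb
  set dd := p₁.2 - p₀.2 with hdd
  have hbd : ¬ (bb = 0 ∧ dd = 0) := by
    rintro ⟨h1, h2⟩
    apply hne
    apply Prod.ext
    · rw [hbb] at h1; linarith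
    · rw [hdd] at h2; linarith
  have hsc := part1 p₀.1 p₀.2 bb dd hbd
  have h01 : (0:ℝ) ≠ 1 := zero_ne_one
  have := hsc.2 (Set.mem_univ (0:ℝ)) (Set.mem_univ (1:ℝ)) h01
    (by norm_num : (0:ℝ) < 1/2) (by norm_num : (0:ℝ) < 1/2) (by norm_num)
  simp only [smul_eq_mul] at this
  have he0 : q (p₀.1 + bb * ((1:ℝ)/2 * 0 + 1/2 * 1), p₀.2 + dd * ((1:ℝ)/2 * 0 + 1/2 * 1))
      = q (p₀.1 + bb * (1/2), p₀.2 + dd * (1/2)) := by norm_num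
  have hf0 : q (p₀.1 + bb * 0, p₀.2 + dd * 0) = q p₀ := by simp
  have hf1 : q (p₀.1 + bb * 1, p₀.2 + dd * 1) = q p₁ := by
    rw [hbb, hdd]; ring_nf
  have hmid : q p₀ ≤ q (p₀.1 + bb * (1/2), p₀.2 + dd * (1/2)) := hglobal _
  rw [he0, hf0, hf1, hqeq] at this
  linarith
end

section
/- Let k be a positive integer and define f_k(σ,τ) = (k²(σ+1)³(τ+1)² + k(σ+1)³(τ+1)² + 6στ)/(2στ) on ℝ²_{>0}. Then f_k(σ,τ) ≥ 27k(k+1)/2 + 3 for all σ,τ > 0, with equality if and only if (σ,τ) = (1/2, 1). In particular, the unique minimizer is independent of k. -/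
/-- The trace of the curve αᵏγ⁻¹ on the unipotent locus is at least
27k(k+1)/2 + 3, with equality exactly at (σ, τ) = (1/2, 1); in particular the
unique minimizer is independent of k. -/
theorem trace_alpha_pow_k_min (k : ℕ) (hk : 0 < k) (σ τ : ℝ) (hσ : 0 < σ) (hτ : 0 < τ) :
    27 * (k : ℝ) * ((k : ℝ) + 1) / 2 + 3 ≤
      ((k : ℝ)^2 * (σ+1)^3 * (τ+1)^2 + (k : ℝ) * (σ+1)^3 * (τ+1)^2 + 6*σ*τ) / (2*σ*τ) ∧
    (((k : ℝ)^2 * (σ+1)^3 * (τ+1)^2 + (k : ℝ) * (σ+1)^3 * (τ+1)^2 + 6*σ*τ) / (2*σ*τ)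
        = 27 * (k : ℝ) * ((k : ℝ) + 1) / 2 + 3 ↔ σ = 1/2 ∧ τ = 1) := by
  have hkR : (1 : ℝ) ≤ (k : ℝ) := by exact_mod_cast hk
  have hA : (0 : ℝ) < (k : ℝ)^2 + (k : ℝ) := by positivity
  have h2 : (0 : ℝ) < 2 * σ * τ := by positivity
  have hE : (σ+1)^3 * (τ+1)^2 - 27 * σ * τ
      = (σ - 1/2)^2 * (σ + 4) * (τ+1)^2 + 27/4 * σ * (τ-1)^2 := by ring
  have hE0 : 0 ≤ (σ+1)^3 * (τ+1)^2 - 27 * σ * τ := by rw [hE]; positivity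
  constructor
  · rw [le_div_iff₀ h2]
    nlinarith [mul_nonneg hA.le hE0]
  · rw [div_eq_iff h2.ne']
    constructor
    · intro h
      have hAE : ((k : ℝ)^2 + (k : ℝ)) * ((σ+1)^3 * (τ+1)^2 - 27 * σ * τ) = 0 := by
        nlinarith [h]
      have hEz : (σ+1)^3 * (τ+1)^2 - 27 * σ * τ = 0 := by
        rcases mul_eq_zero.mp hAE with h' | h'
        · exact absurd h' hA.ne'
        · exact h'
      rw [hE] at hEz
      have t1 : (0:ℝ) ≤ (σ - 1/2)^2 * (σ + 4) * (τ+1)^2 := by positivity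
      have t2 : (0:ℝ) ≤ 27/4 * σ * (τ-1)^2 := by positivity
      have hz1 : (σ - 1/2)^2 * (σ + 4) * (τ+1)^2 = 0 := by linarith
      have hz2 : 27/4 * σ * (τ-1)^2 = 0 := by linarith
      have hτ1 : τ = 1 := by
        have hs2 : (τ-1)^2 = 0 := by
          rcases mul_eq_zero.mp hz2 with h' | h'
          · exact absurd h' (by positivity)
          · exact h'
        have := pow_eq_zero_iff (two_ne_zero) |>.mp hs2
        linarith
      have hσ1 : σ = 1/2 := by
        have hs1 : (σ - 1/2)^2 = 0 := by
          rcases mul_eq_zero.mp hz1 with h' | h'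
          · rcases mul_eq_zero.mp h' with h'' | h''
            · exact h''
            · exact absurd h'' (by positivity)
          · exact absurd h' (by positivity)
        have := pow_eq_zero_iff (two_ne_zero) |>.mp hs1
        linarith
      exact ⟨hσ1, hτ1⟩
    · rintro ⟨rfl, rfl⟩
      ring
end

section
/- Let k be a positive integer, a a real number, and σ, τ > 0. Define g(t) = f_k(σ, e^{at}τ), where f_k(σ,τ) = (k(k+1)(σ+1)³(τ+1)² + 6στ)/(2στ). Then for all t ∈ ℝ, g''(t) = a²k(k+1)(σ+1)³ e^{−at}(τ² e^{2at} + 1)/(2στ). In particular g is strictly convex whenever a ≠ 0. -/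
/-!
Writing `x = e^{at} τ` and `C = k(k+1)(σ+1)³`, the trace is
`C/(2σ) · (x + x⁻¹) + C/σ + 3`, so `g` is a positive combination of `e^{at}` and `e^{-at}`
plus a constant; differentiating twice multiplies both exponentials by `a²`.
-/

open Real

namespace ExpCombination

variable (A B c a : ℝ)

theorem hasDerivAt_exp_mul (t : ℝ) :
    HasDerivAt (fun t => exp (a * t)) (a * exp (a * t)) t := by
  simpa [mul_comm] using ((hasDerivAt_id t).const_mul a).exp

theorem hasDerivAt (t : ℝ) :
    HasDerivAt (fun t => A * exp (a * t) + B * exp (-a * t) + c)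
      (a * A * exp (a * t) + -a * B * exp (-a * t)) t :=
  (((hasDerivAt_exp_mul a t).const_mul A).add
    ((hasDerivAt_exp_mul (-a) t).const_mul B)).add_const c |>.congr_deriv (by ring)

theorem deriv_deriv_eq :
    deriv (deriv fun t => A * exp (a * t) + B * exp (-a * t) + c)
      = fun t => a ^ 2 * (A * exp (a * t) + B * exp (-a * t)) := by
  have hderiv : deriv (fun t => A * exp (a * t) + B * exp (-a * t) + c)
      = fun t => a * A * exp (a * t) + -a * B * exp (-a * t) + 0 := by
    funext t
    rw [(hasDerivAt A B c a t).deriv, add_zero]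
  funext t
  rw [hderiv, (hasDerivAt _ _ _ a t).deriv]
  ring

theorem strictConvexOn_univ (hA : 0 < A) (hB : 0 < B) (ha : a ≠ 0) :
    StrictConvexOn ℝ Set.univ fun t => A * exp (a * t) + B * exp (-a * t) + c := by
  refine strictConvexOn_univ_of_deriv2_pos (by fun_prop) fun t => ?_
  rw [Function.iterate_succ_apply, Function.iterate_one, deriv_deriv_eq]
  positivity

end ExpCombination

theorem div_two_mul_self_eq {C σ x : ℝ} (hσ : σ ≠ 0) (hx : x ≠ 0) :
    (C * (x + 1) ^ 2 + 6 * σ * x) / (2 * σ * x) = C / (2 * σ) * (x + x⁻¹) + (C / σ + 3) := by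
  field_simp
  ring

/-- Second derivative of the trace of αᵏγ⁻¹ on the unipotent locus along the
eruption-flow direction (scaling τ by e^{at}), and strict convexity for a ≠ 0. -/
theorem trace_alpha_pow_k_second_deriv_eruption
    (k : ℕ) (hk : 0 < k) (a σ τ : ℝ) (hσ : 0 < σ) (hτ : 0 < τ)
    (g : ℝ → ℝ)
    (hg : ∀ t, g t = ((k : ℝ) * ((k : ℝ) + 1) * (σ+1)^3 * (Real.exp (a*t) * τ + 1)^2
        + 6 * σ * (Real.exp (a*t) * τ)) / (2 * σ * (Real.exp (a*t) * τ))) :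
    (∀ t : ℝ, deriv (deriv g) t =
      a^2 * (k : ℝ) * ((k : ℝ) + 1) * (σ+1)^3 * Real.exp (-(a*t))
        * (τ^2 * Real.exp (2*a*t) + 1) / (2*σ*τ)) ∧
    (a ≠ 0 → StrictConvexOn ℝ Set.univ g) := by
  set C : ℝ := (k : ℝ) * ((k : ℝ) + 1) * (σ + 1) ^ 3
  have hC : 0 < C := by positivity
  have hg_exp : g = fun t => C * τ / (2 * σ) * exp (a * t) + C / (2 * σ * τ) * exp (-a * t)
      + (C / σ + 3) := by
    funext t
    rw [hg, div_two_mul_self_eq hσ.ne' (by positivity), neg_mul, exp_neg]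
    field_simp
  refine ⟨fun t => ?_, fun ha => hg_exp ▸ ExpCombination.strictConvexOn_univ _ _ _ _
    (by positivity) (by positivity) ha⟩
  rw [hg_exp, ExpCombination.deriv_deriv_eq]
  dsimp only
  rw [neg_mul, exp_neg, show 2 * a * t = a * t + a * t by ring, exp_add]
  field_simp
  ring
end

section
/- The vector field W(σ,τ) with components W₁ = 2(σ+1)⁴(τ+1)(σ²(2τ²+τ−1) + σ(4τ²−τ+1) + 2τ²+τ−1)/(σ²τ) and W₂ = 6(σ−1)(σ+1)³(τ+1)²(σ²(τ+1) + 2στ + τ+1)/σ³ on ℝ²_{>0} vanishes at a point (σ,τ) with σ,τ > 0 if and only if σ = 1 and τ = (√33 − 1)/16. -/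
/-- The Hamiltonian vector field of the trace of the commutator [α,γ] on the
unipotent locus vanishes exactly at σ = 1, τ = (√33 − 1)/16. -/
theorem trace_commutator_vector_field_zero (σ τ : ℝ) (hσ : 0 < σ) (hτ : 0 < τ) :
    (2 * (σ+1)^4 * (τ+1) * (σ^2 * (2*τ^2 + τ - 1) + σ * (4*τ^2 - τ + 1)
        + 2*τ^2 + τ - 1) / (σ^2 * τ) = 0 ∧
     6 * (σ-1) * (σ+1)^3 * (τ+1)^2 * (σ^2 * (τ+1) + 2*σ*τ + τ + 1) / σ^3 = 0)
    ↔ (σ = 1 ∧ τ = (Real.sqrt 33 - 1) / 16) := by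
  have h33 : Real.sqrt 33 ^ 2 = 33 := Real.sq_sqrt (by norm_num)
  have h33pos : 1 < Real.sqrt 33 := by
    nlinarith [Real.sqrt_nonneg 33, h33]
  constructor
  · rintro ⟨h1, h2⟩
    have hσ3 : (σ:ℝ)^3 ≠ 0 := by positivity
    have hnum2 : 6 * (σ-1) * (σ+1)^3 * (τ+1)^2 * (σ^2 * (τ+1) + 2*σ*τ + τ + 1) = 0 := by
      rcases div_eq_zero_iff.mp h2 with h | h
      · exact h
      · exact absurd h hσ3
    have hA : 0 < (σ+1)^3 * ((τ+1)^2 * (σ^2 * (τ+1) + 2*σ*τ + τ + 1)) := by positivity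
    have h6 : (σ-1) * ((σ+1)^3 * ((τ+1)^2 * (σ^2 * (τ+1) + 2*σ*τ + τ + 1))) = 0 := by
      linear_combination hnum2 / 6
    have hσ1 : σ = 1 := by
      rcases mul_eq_zero.mp h6 with h | h
      · linarith
      · exact absurd h (ne_of_gt hA)
    subst hσ1
    refine ⟨rfl, ?_⟩
    have hden : ((1:ℝ)^2 * τ) ≠ 0 := by positivity
    have hnum1 : 2 * ((1:ℝ)+1)^4 * (τ+1) * (1^2 * (2*τ^2 + τ - 1) + 1 * (4*τ^2 - τ + 1)
        + 2*τ^2 + τ - 1) = 0 := by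
      rcases div_eq_zero_iff.mp h1 with h | h
      · exact h
      · exact absurd h hden
    have hq : 8*τ^2 + τ - 1 = 0 := by
      have h32 : (τ+1) * (8*τ^2 + τ - 1) = 0 := by linear_combination hnum1 / 32
      rcases mul_eq_zero.mp h32 with h | h
      · linarith
      · exact h
    have h16 : (16*τ + 1)^2 = 33 := by nlinarith [hq]
    have hs : Real.sqrt 33 = 16*τ + 1 := by
      rw [show (33:ℝ) = (16*τ+1)^2 from h16.symm]
      exact Real.sqrt_sq (by linarith)
    rw [hs]; ring
  · rintro ⟨rfl, rfl⟩
    constructor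
    · rw [div_eq_zero_iff]
      left
      linear_combination ((Real.sqrt 33 - 1) / 16 + 1) * h33
    · norm_num
end

section
/- Define F(σ,τ) = (1/(σ³τ))·(σ⁶(τ+1)³ + 3σ⁵(τ+1)²(2τ+1) + 3σ⁴(τ+1)²(5τ+1) + σ³(20τ³+42τ²+27τ+2) + 3σ²(τ+1)²(5τ+1) + 3σ(τ+1)²(2τ+1) + (τ+1)³) on ℝ²_{>0}. Then F is positive and proper: for every real C the sublevel set {(σ,τ) ∈ ℝ²_{>0} : F(σ,τ) ≤ C} is compact. In particular F attains a minimum on ℝ²_{>0}. -/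
/-- Trace of the commutator [α,γ] on the unipotent locus. -/
noncomputable def commutatorTrace (σ τ : ℝ) : ℝ :=
  (1 / (σ^3 * τ)) *
    (σ^6 * (τ+1)^3 + 3*σ^5 * (τ+1)^2 * (2*τ+1) + 3*σ^4 * (τ+1)^2 * (5*τ+1)
      + σ^3 * (20*τ^3 + 42*τ^2 + 27*τ + 2) + 3*σ^2 * (τ+1)^2 * (5*τ+1)
      + 3*σ * (τ+1)^2 * (2*τ+1) + (τ+1)^3)

lemma ct_eq (σ τ : ℝ) : commutatorTrace σ τ =
    (σ^6 * (τ+1)^3 + 3*σ^5 * (τ+1)^2 * (2*τ+1) + 3*σ^4 * (τ+1)^2 * (5*τ+1)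
      + σ^3 * (20*τ^3 + 42*τ^2 + 27*τ + 2) + 3*σ^2 * (τ+1)^2 * (5*τ+1)
      + 3*σ * (τ+1)^2 * (2*τ+1) + (τ+1)^3) / (σ^3*τ) := by
  rw [commutatorTrace, one_div, inv_mul_eq_div]

lemma ct_bounds {σ τ : ℝ} (hσ : 0 < σ) (hτ : 0 < τ) :
    σ^3 ≤ commutatorTrace σ τ ∧ 1/σ^3 ≤ commutatorTrace σ τ ∧
    τ^2 ≤ commutatorTrace σ τ ∧ 1/τ ≤ commutatorTrace σ τ := by
  have hst : 0 < σ^3 * τ := by positivity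
  have h1 : (0:ℝ) ≤ 3*σ^5 * (τ+1)^2 * (2*τ+1) := by positivity
  have h2 : (0:ℝ) ≤ 3*σ^4 * (τ+1)^2 * (5*τ+1) := by positivity
  have h3 : (0:ℝ) ≤ 3*σ^2 * (τ+1)^2 * (5*τ+1) := by positivity
  have h4 : (0:ℝ) ≤ 3*σ * (τ+1)^2 * (2*τ+1) := by positivity
  have h5 : (0:ℝ) ≤ σ^6 * (τ+1)^3 := by positivity
  have h6 : (0:ℝ) ≤ (τ+1)^3 := by positivity
  have h7 : (0:ℝ) ≤ σ^3 * (20*τ^3 + 42*τ^2 + 27*τ + 2) := by positivity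
  have k1 : σ^6 * τ ≤ σ^6 * (τ+1)^3 := by nlinarith [pow_pos hσ 6, sq_nonneg τ]
  have k2 : τ ≤ (τ+1)^3 := by nlinarith [sq_nonneg τ]
  have k3 : τ^2 * (σ^3*τ) ≤ σ^3 * (20*τ^3 + 42*τ^2 + 27*τ + 2) := by
    nlinarith [pow_pos hσ 3, pow_pos hτ 3]
  refine ⟨?_, ?_, ?_, ?_⟩ <;> rw [ct_eq, le_div_iff₀ hst]
  · nlinarith
  · rw [one_div, inv_mul_le_iff₀ (by positivity)]
    nlinarith
  · nlinarith
  · rw [one_div, inv_mul_le_iff₀ hτ]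
    nlinarith [pow_pos hσ 3, mul_pos (pow_pos hσ 3) hτ]

lemma ct_pos {σ τ : ℝ} (hσ : 0 < σ) (hτ : 0 < τ) : 0 < commutatorTrace σ τ :=
  lt_of_lt_of_le (by positivity) (ct_bounds hσ hτ).2.2.2

lemma ct_continuousAt {p : ℝ × ℝ} (hσ : 0 < p.1) (hτ : 0 < p.2) :
    ContinuousAt (fun q : ℝ × ℝ => commutatorTrace q.1 q.2) p := by
  have he : (fun q : ℝ × ℝ => commutatorTrace q.1 q.2) =
      fun q : ℝ × ℝ => (q.1^6 * (q.2+1)^3 + 3*q.1^5 * (q.2+1)^2 * (2*q.2+1)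
        + 3*q.1^4 * (q.2+1)^2 * (5*q.2+1)
        + q.1^3 * (20*q.2^3 + 42*q.2^2 + 27*q.2 + 2) + 3*q.1^2 * (q.2+1)^2 * (5*q.2+1)
        + 3*q.1 * (q.2+1)^2 * (2*q.2+1) + (q.2+1)^3) / (q.1^3*q.2) :=
    funext fun q => ct_eq q.1 q.2
  rw [he]
  exact ContinuousAt.div (by fun_prop) (by fun_prop) (ne_of_gt (by positivity))

-- bound extraction
lemma box_bounds {σ : ℝ} {C : ℝ} (hσ : 0 < σ) (h3 : σ^3 ≤ C) (hi : 1/σ^3 ≤ C) :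
    min 1 C⁻¹ ≤ σ ∧ σ ≤ max 1 C := by
  have hC : 0 < C := lt_of_lt_of_le (by positivity) h3
  constructor
  · rcases le_total 1 σ with h | h
    · exact le_trans (min_le_left _ _) h
    · have hσ3 : σ^3 ≤ σ := by nlinarith [mul_nonneg (mul_nonneg hσ.le (by linarith : (0:ℝ) ≤ 1 - σ)) (by linarith : (0:ℝ) ≤ 1 + σ)]
      have : 1/σ ≤ 1/σ^3 := by
        apply one_div_le_one_div_of_le (by positivity) hσ3
      have h1 : σ⁻¹ ≤ C := by rw [← one_div]; exact le_trans this hi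
      exact le_trans (min_le_right _ _) ((inv_le_comm₀ hC hσ).mpr h1)
  · rcases le_total σ 1 with h | h
    · exact le_trans h (le_max_left _ _)
    · have : σ ≤ σ^3 := by nlinarith [mul_nonneg (mul_nonneg hσ.le (by linarith : (0:ℝ) ≤ σ - 1)) (by linarith : (0:ℝ) ≤ σ + 1)]
      exact le_trans (le_trans this h3) (le_max_right _ _)

lemma box_bounds2 {τ : ℝ} {C : ℝ} (hτ : 0 < τ) (h2 : τ^2 ≤ C) (hi : 1/τ ≤ C) :
    min 1 C⁻¹ ≤ τ ∧ τ ≤ max 1 C := by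
  have hC : 0 < C := lt_of_lt_of_le (by positivity) h2
  constructor
  · rcases le_total 1 τ with h | h
    · exact le_trans (min_le_left _ _) h
    · have : C⁻¹ ≤ τ := by
        rw [one_div] at hi
        rwa [inv_le_comm₀ hτ hC] at hi
      exact le_trans (min_le_right _ _) this
  · rcases le_total τ 1 with h | h
    · exact le_trans h (le_max_left _ _)
    · have : τ ≤ τ^2 := by nlinarith
      exact le_trans (le_trans this h2) (le_max_right _ _)

lemma ct_sublevel_compact (C : ℝ) :
    IsCompact {p : ℝ × ℝ | 0 < p.1 ∧ 0 < p.2 ∧ commutatorTrace p.1 p.2 ≤ C} := by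
  set S := {p : ℝ × ℝ | 0 < p.1 ∧ 0 < p.2 ∧ commutatorTrace p.1 p.2 ≤ C} with hS
  have hsub : S ⊆ Set.Icc (min 1 C⁻¹) (max 1 C) ×ˢ Set.Icc (min 1 C⁻¹) (max 1 C) := by
    rintro ⟨σ, τ⟩ ⟨hσ, hτ, hF⟩
    obtain ⟨b1, b2, b3, b4⟩ := ct_bounds hσ hτ
    obtain ⟨l1, u1⟩ := box_bounds hσ (le_trans b1 hF) (le_trans b2 hF)
    obtain ⟨l2, u2⟩ := box_bounds2 hτ (le_trans b3 hF) (le_trans b4 hF)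
    exact ⟨⟨l1, u1⟩, ⟨l2, u2⟩⟩
  have hclosed : IsClosed S := by
    apply IsSeqClosed.isClosed
    intro u p hu hup
    have hm : ∀ n, u n ∈ Set.Icc (min 1 C⁻¹) (max 1 C) ×ˢ Set.Icc (min 1 C⁻¹) (max 1 C) :=
      fun n => hsub (hu n)
    have hC : 0 < C := lt_of_lt_of_le (ct_pos (hu 0).1 (hu 0).2.1) (hu 0).2.2
    have hmpos : (0:ℝ) < min 1 C⁻¹ := by positivity
    have hp1 : min 1 C⁻¹ ≤ p.1 := by
      apply ge_of_tendsto ((continuous_fst.tendsto p).comp hup)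
      exact Filter.Eventually.of_forall fun n => (hm n).1.1
    have hp2 : min 1 C⁻¹ ≤ p.2 := by
      apply ge_of_tendsto ((continuous_snd.tendsto p).comp hup)
      exact Filter.Eventually.of_forall fun n => (hm n).2.1
    have hσ : 0 < p.1 := lt_of_lt_of_le hmpos hp1
    have hτ : 0 < p.2 := lt_of_lt_of_le hmpos hp2
    refine ⟨hσ, hτ, ?_⟩
    have hcont := ct_continuousAt hσ hτ
    have : Filter.Tendsto (fun n => commutatorTrace (u n).1 (u n).2)
        Filter.atTop (nhds (commutatorTrace p.1 p.2)) := hcont.tendsto.comp hup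
    exact le_of_tendsto this (Filter.Eventually.of_forall fun n => (hu n).2.2)
  exact ((isCompact_Icc.prod isCompact_Icc).of_isClosed_subset hclosed hsub)

/-- The trace of the commutator on the unipotent locus is positive and proper
(all sublevel sets in the open positive quadrant are compact); in particular it
attains a minimum there. -/
theorem commutator_trace_positive_proper :
    (∀ σ τ : ℝ, 0 < σ → 0 < τ → 0 < commutatorTrace σ τ) ∧
    (∀ C : ℝ, IsCompact {p : ℝ × ℝ | 0 < p.1 ∧ 0 < p.2 ∧ commutatorTrace p.1 p.2 ≤ C}) ∧
    (∃ p : ℝ × ℝ, 0 < p.1 ∧ 0 < p.2 ∧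
      ∀ q : ℝ × ℝ, 0 < q.1 → 0 < q.2 →
        commutatorTrace p.1 p.2 ≤ commutatorTrace q.1 q.2) := by
  refine ⟨fun σ τ hσ hτ => ct_pos hσ hτ, ct_sublevel_compact, ?_⟩
  set C := commutatorTrace 1 1 with hCdef
  set S := {p : ℝ × ℝ | 0 < p.1 ∧ 0 < p.2 ∧ commutatorTrace p.1 p.2 ≤ C} with hS
  have hne : S.Nonempty := ⟨(1, 1), by norm_num, by norm_num, le_refl _⟩
  have hcont : ContinuousOn (fun q : ℝ × ℝ => commutatorTrace q.1 q.2) S :=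
    fun p hp => (ct_continuousAt hp.1 hp.2.1).continuousWithinAt
  obtain ⟨p, hpS, hmin⟩ := (ct_sublevel_compact C).exists_isMinOn hne hcont
  have hmin' := isMinOn_iff.mp hmin
  refine ⟨p, hpS.1, hpS.2.1, fun q hq1 hq2 => ?_⟩
  by_cases hqC : commutatorTrace q.1 q.2 ≤ C
  · exact hmin' q ⟨hq1, hq2, hqC⟩
  · exact le_trans (hmin' (1,1) ⟨by norm_num, by norm_num, le_refl _⟩)
      (le_of_not_ge hqC)
end

section
/- Define F(σ,τ) = (1/(σ³τ))·(σ⁶(τ+1)³ + 3σ⁵(τ+1)²(2τ+1) + 3σ⁴(τ+1)²(5τ+1) + σ³(20τ³+42τ²+27τ+2) + 3σ²(τ+1)²(5τ+1) + 3σ(τ+1)²(2τ+1) + (τ+1)³). Then the function (u,v) ↦ F(eᵘ, eᵛ) is strictly convex along every non-constant affine line in ℝ². Consequently F has a unique critical point on ℝ²_{>0}. -/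
open Set Real

theorem ConvexOn.fun_sum {𝕜 E β ι : Type*} [Semiring 𝕜] [PartialOrder 𝕜] [AddCommMonoid E]
    [SMul 𝕜 E] [AddCommMonoid β] [PartialOrder β] [IsOrderedAddMonoid β] [Module 𝕜 β]
    {S : Set E} (hS : Convex 𝕜 S) (s : Finset ι) {f : ι → E → β}
    (hf : ∀ i ∈ s, ConvexOn 𝕜 S (f i)) : ConvexOn 𝕜 S (fun x => ∑ i ∈ s, f i x) := by
  induction s using Finset.cons_induction with
  | empty => simpa using convexOn_const (0 : β) hS
  | cons i s _ ih =>
    simp only [Finset.sum_cons]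
    exact (hf i (Finset.mem_cons_self i s)).add
      (ih fun j hj => hf j (Finset.mem_cons_of_mem hj))

theorem affine_convex_combination (θ l x y a b : ℝ) (hab : a + b = 1) :
    θ + l * (a * x + b * y) = a * (θ + l * x) + b * (θ + l * y) := by
  linear_combination (-θ) * hab

theorem convexOn_mul_exp_affine {c : ℝ} (hc : 0 ≤ c) (θ l : ℝ) :
    ConvexOn ℝ univ (fun t => c * exp (θ + l * t)) := by
  refine ⟨convex_univ, fun x _ y _ a b ha hb hab => ?_⟩
  have h := convexOn_exp.2 (mem_univ (θ + l * x)) (mem_univ (θ + l * y)) ha hb hab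
  simp only [smul_eq_mul] at h ⊢
  rw [affine_convex_combination θ l x y a b hab]
  linear_combination mul_le_mul_of_nonneg_left h hc

theorem strictConvexOn_mul_exp_affine {c : ℝ} (hc : 0 < c) (θ : ℝ) {l : ℝ} (hl : l ≠ 0) :
    StrictConvexOn ℝ univ (fun t => c * exp (θ + l * t)) := by
  refine ⟨convex_univ, fun x _ y _ hxy a b ha hb hab => ?_⟩
  have hne : θ + l * x ≠ θ + l * y := by simpa [hl] using hxy
  have h := strictConvexOn_exp.2 (mem_univ _) (mem_univ _) hne ha hb hab
  simp only [smul_eq_mul] at h ⊢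
  rw [affine_convex_combination θ l x y a b hab]
  linear_combination mul_lt_mul_of_pos_left h hc

theorem strictConvexOn_sum_mul_exp_affine {ι : Type*} {s : Finset ι} {c θ l : ι → ℝ}
    (hc : ∀ i ∈ s, 0 ≤ c i) {i₀ : ι} (hi₀ : i₀ ∈ s) (hc₀ : 0 < c i₀) (hl₀ : l i₀ ≠ 0) :
    StrictConvexOn ℝ univ (fun t => ∑ i ∈ s, c i * exp (θ i + l i * t)) := by
  classical
  simp_rw [← Finset.add_sum_erase s _ hi₀]
  exact (strictConvexOn_mul_exp_affine hc₀ (θ i₀) hl₀).add_convexOn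
    (ConvexOn.fun_sum convex_univ _ fun i hi =>
      convexOn_mul_exp_affine (hc i (Finset.mem_of_mem_erase hi)) (θ i) (l i))

theorem strictConvexOn_univ_of_line {E : Type*} [AddCommGroup E] [Module ℝ E] {f : E → ℝ}
    (h : ∀ x v : E, v ≠ 0 → StrictConvexOn ℝ univ (fun t : ℝ => f (x + t • v))) :
    StrictConvexOn ℝ univ f := by
  refine ⟨convex_univ, fun x _ y _ hxy a b ha hb hab => ?_⟩
  have h01 := (h x (y - x) (sub_ne_zero.2 hxy.symm)).2 (mem_univ 0) (mem_univ 1)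
    zero_ne_one ha hb hab
  have hline : x + b • (y - x) = a • x + b • y := by
    rw [eq_sub_of_add_eq hab]; module
  simpa [hline] using h01

theorem ConvexOn.isMinOn_of_hasFDerivAt_eq_zero {E : Type*} [NormedAddCommGroup E]
    [NormedSpace ℝ E] {f : E → ℝ} (hf : ConvexOn ℝ univ f) {x : E}
    (hx : HasFDerivAt f (0 : E →L[ℝ] ℝ) x) : IsMinOn f univ x := by
  intro z _
  have hline : HasDerivAt (AffineMap.lineMap (k := ℝ) x z) (z - x) 0 :=
    AffineMap.hasDerivAt_lineMap
  have hg : HasDerivAt (f ∘ AffineMap.lineMap (k := ℝ) x z) 0 0 := by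
    simpa using (AffineMap.lineMap_apply_zero (k := ℝ) x z ▸ hx).comp_hasDerivAt 0 hline
  have hmin := (hf.comp_affineMap (AffineMap.lineMap (k := ℝ) x z)).isMinOn_of_rightDeriv_eq_zero
    (by simp) ((hg.hasDerivWithinAt).derivWithin (uniqueDiffWithinAt_Ioi 0))
  simpa using hmin (mem_univ 1)

theorem StrictConvexOn.eq_of_hasFDerivAt_eq_zero {E : Type*} [NormedAddCommGroup E]
    [NormedSpace ℝ E] {f : E → ℝ} (hf : StrictConvexOn ℝ univ f) {x y : E}
    (hx : HasFDerivAt f (0 : E →L[ℝ] ℝ) x) (hy : HasFDerivAt f (0 : E →L[ℝ] ℝ) y) : x = y :=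
  hf.eq_of_isMinOn (hf.convexOn.isMinOn_of_hasFDerivAt_eq_zero hx)
    (hf.convexOn.isMinOn_of_hasFDerivAt_eq_zero hy) (mem_univ x) (mem_univ y)

theorem deriv_one_eq_zero_of_comp_inv {h : ℝ → ℝ} (hsym : ∀ s ≠ 0, h s⁻¹ = h s) :
    deriv h 1 = 0 := by
  by_cases hd : DifferentiableAt ℝ h 1
  · have hinv : HasDerivAt (fun s => h s⁻¹) (deriv h 1 * -(1 ^ 2)⁻¹) 1 :=
      (by rw [inv_one]; exact hd.hasDerivAt : HasDerivAt h (deriv h 1) 1⁻¹).comp 1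
        (hasDerivAt_inv one_ne_zero)
    have hh : HasDerivAt h (deriv h 1 * -(1 ^ 2)⁻¹) 1 :=
      hinv.congr_of_eventuallyEq
        ((eventually_ne_nhds one_ne_zero).mono fun s hs => (hsym s hs).symm)
    linarith [hd.hasDerivAt.unique hh]
  · exact deriv_zero_of_not_differentiableAt hd

theorem fderiv_eq_zero_of_partialDeriv_eq_zero {f : ℝ × ℝ → ℝ} {p : ℝ × ℝ}
    (hf : DifferentiableAt ℝ f p) (h₁ : deriv (fun s => f (s, p.2)) p.1 = 0)
    (h₂ : deriv (fun t => f (p.1, t)) p.2 = 0) : fderiv ℝ f p = 0 := by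
  have hf' : HasFDerivAt f (fderiv ℝ f p) (p.1, p.2) := hf.hasFDerivAt
  ext
  · show fderiv ℝ f p (1, 0) = 0
    exact ((hf'.comp_hasDerivAt p.1
      ((hasDerivAt_id p.1).prodMk (hasDerivAt_const p.1 p.2))).deriv).symm.trans h₁
  · show fderiv ℝ f p (0, 1) = 0
    exact ((hf'.comp_hasDerivAt p.2
      ((hasDerivAt_const p.2 p.1).prodMk (hasDerivAt_id p.2))).deriv).symm.trans h₂

-- `commutatorTraceCoeff i j` is the coefficient of `σ^i τ^j` in the numerator `σ³τ F(σ, τ)`.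
def commutatorTraceCoeff : Fin 7 → Fin 4 → ℝ :=
  ![![1, 3, 3, 1], ![3, 12, 15, 6], ![3, 21, 33, 15], ![2, 27, 42, 20],
    ![3, 21, 33, 15], ![3, 12, 15, 6], ![1, 3, 3, 1]]

theorem commutatorTraceCoeff_pos (i : Fin 7) (j : Fin 4) : 0 < commutatorTraceCoeff i j := by
  fin_cases i <;> fin_cases j <;> norm_num [commutatorTraceCoeff]

theorem exp_monomial (i j : ℕ) (u v : ℝ) :
    exp ((i - 3) * u + (j - 1) * v) = exp u ^ i * exp v ^ j / (exp u ^ 3 * exp v) := by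
  rw [show (i - 3) * u + (j - 1) * v = (i * u + j * v) - (((3 : ℕ) : ℝ) * u + v) by
      push_cast; ring,
    exp_sub, exp_add, exp_add, exp_nat_mul, exp_nat_mul, exp_nat_mul]

theorem commutatorTrace_exp (u v : ℝ) :
    commutatorTrace (exp u) (exp v) = ∑ ij : Fin 7 × Fin 4,
      commutatorTraceCoeff ij.1 ij.2 * exp ((ij.1 - 3) * u + (ij.2 - 1) * v) := by
  simp only [exp_monomial, Fintype.sum_prod_type, Fin.sum_univ_succ, Fin.sum_univ_zero]
  simp [commutatorTraceCoeff, commutatorTrace]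
  field_simp
  ring

theorem strictConvexOn_commutatorTrace_exp_line (u₀ v₀ b c : ℝ) (hbc : ¬ (b = 0 ∧ c = 0)) :
    StrictConvexOn ℝ univ (fun t : ℝ =>
      commutatorTrace (exp (u₀ + b * t)) (exp (v₀ + c * t))) := by
  have hline : ∀ t : ℝ, commutatorTrace (exp (u₀ + b * t)) (exp (v₀ + c * t)) =
      ∑ ij : Fin 7 × Fin 4, commutatorTraceCoeff ij.1 ij.2 *
        exp (((ij.1 - 3) * u₀ + (ij.2 - 1) * v₀) + ((ij.1 - 3) * b + (ij.2 - 1) * c) * t) := by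
    intro t
    rw [commutatorTrace_exp]
    exact Finset.sum_congr rfl fun ij _ => by ring_nf
  simp_rw [hline]
  have hcoeff : ∀ ij ∈ (Finset.univ : Finset (Fin 7 × Fin 4)),
      0 ≤ commutatorTraceCoeff ij.1 ij.2 := fun ij _ => (commutatorTraceCoeff_pos _ _).le
  by_cases hb : b = 0
  · -- the index `(3, 2)` is the summand `τ = eᵛ`, and `(4, 1)` below is `σ = eᵘ`
    exact strictConvexOn_sum_mul_exp_affine hcoeff (Finset.mem_univ (3, 2))
      (commutatorTraceCoeff_pos _ _) (by norm_num [hb]; tauto)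
  · exact strictConvexOn_sum_mul_exp_affine hcoeff (Finset.mem_univ (4, 1))
      (commutatorTraceCoeff_pos _ _) (by norm_num [hb])

theorem strictConvexOn_commutatorTrace_exp :
    StrictConvexOn ℝ univ (fun x : ℝ × ℝ => commutatorTrace (exp x.1) (exp x.2)) := by
  refine strictConvexOn_univ_of_line fun x v hv => ?_
  have hv' : ¬ (v.1 = 0 ∧ v.2 = 0) := fun h => hv (Prod.ext h.1 h.2)
  simpa only [Prod.fst_add, Prod.snd_add, Prod.smul_fst, Prod.smul_snd, smul_eq_mul, mul_comm]
    using strictConvexOn_commutatorTrace_exp_line x.1 x.2 v.1 v.2 hv'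

theorem commutatorTrace_inv_left (σ τ : ℝ) : commutatorTrace σ⁻¹ τ = commutatorTrace σ τ := by
  unfold commutatorTrace
  rcases eq_or_ne σ 0 with rfl | hσ
  · simp
  field_simp
  ring

theorem commutatorTrace_one_left {τ : ℝ} (hτ : τ ≠ 0) :
    commutatorTrace 1 τ = 64 * τ ^ 2 + 144 * τ + 99 + 16 * τ⁻¹ := by
  unfold commutatorTrace
  field_simp
  ring

theorem differentiableAt_commutatorTrace {p : ℝ × ℝ} (hσ : p.1 ≠ 0) (hτ : p.2 ≠ 0) :
    DifferentiableAt ℝ (fun q : ℝ × ℝ => commutatorTrace q.1 q.2) p := by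
  unfold commutatorTrace
  fun_prop (disch := simp [hσ, hτ])

theorem fderiv_commutatorTrace_one_eq_zero {τ₀ : ℝ} (hτ₀ : τ₀ ≠ 0)
    (hroot : 8 * τ₀ ^ 2 + τ₀ - 1 = 0) :
    fderiv ℝ (fun q : ℝ × ℝ => commutatorTrace q.1 q.2) (1, τ₀) = 0 := by
  refine fderiv_eq_zero_of_partialDeriv_eq_zero
    (differentiableAt_commutatorTrace one_ne_zero hτ₀)
    (deriv_one_eq_zero_of_comp_inv fun s _ => commutatorTrace_inv_left s τ₀) ?_
  have hslice : HasDerivAt (fun τ => 64 * τ ^ 2 + 144 * τ + 99 + 16 * τ⁻¹)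
      (64 * (2 * τ₀) + 144 + 16 * -(τ₀ ^ 2)⁻¹) τ₀ := by
    simpa using ((((hasDerivAt_pow 2 τ₀).const_mul 64).fun_add
      ((hasDerivAt_id τ₀).const_mul 144)).add_const 99).fun_add
      ((hasDerivAt_inv hτ₀).const_mul 16)
  refine (hslice.congr_of_eventuallyEq ?_).deriv.trans ?_
  · exact (eventually_ne_nhds hτ₀).mono fun τ hτ => commutatorTrace_one_left hτ
  · field_simp
    linear_combination (16 * τ₀ + 16) * hroot

theorem exists_pos_eight_mul_sq_add_sub_one_eq_zero :
    ∃ τ₀ : ℝ, 0 < τ₀ ∧ 8 * τ₀ ^ 2 + τ₀ - 1 = 0 := by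
  have h33 : √33 ^ 2 = 33 := sq_sqrt (by norm_num)
  refine ⟨(√33 - 1) / 16, ?_, by linear_combination h33 / 32⟩
  nlinarith [sqrt_nonneg 33]

theorem hasFDerivAt_commutatorTrace_exp_log {p : ℝ × ℝ} (hp : 0 < p.1 ∧ 0 < p.2)
    (hcrit : fderiv ℝ (fun q : ℝ × ℝ => commutatorTrace q.1 q.2) p = 0) :
    HasFDerivAt (fun x : ℝ × ℝ => commutatorTrace (exp x.1) (exp x.2)) (0 : ℝ × ℝ →L[ℝ] ℝ)
      (log p.1, log p.2) := by
  have hF : HasFDerivAt (fun q : ℝ × ℝ => commutatorTrace q.1 q.2) (0 : ℝ × ℝ →L[ℝ] ℝ)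
      (exp (log p.1), exp (log p.2)) := by
    rw [exp_log hp.1, exp_log hp.2, ← hcrit]
    exact (differentiableAt_commutatorTrace hp.1.ne' hp.2.ne').hasFDerivAt
  have hE : DifferentiableAt ℝ (fun x : ℝ × ℝ => (exp x.1, exp x.2)) (log p.1, log p.2) := by
    fun_prop
  simpa [Function.comp_def] using hF.comp (log p.1, log p.2) hE.hasFDerivAt

theorem eq_of_fderiv_commutatorTrace_eq_zero {p q : ℝ × ℝ} (hp : 0 < p.1 ∧ 0 < p.2)
    (hq : 0 < q.1 ∧ 0 < q.2)
    (hpcrit : fderiv ℝ (fun r : ℝ × ℝ => commutatorTrace r.1 r.2) p = 0)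
    (hqcrit : fderiv ℝ (fun r : ℝ × ℝ => commutatorTrace r.1 r.2) q = 0) : p = q := by
  have hlog := strictConvexOn_commutatorTrace_exp.eq_of_hasFDerivAt_eq_zero
    (hasFDerivAt_commutatorTrace_exp_log hp hpcrit) (hasFDerivAt_commutatorTrace_exp_log hq hqcrit)
  simp only [Prod.mk.injEq] at hlog
  exact Prod.ext (log_injOn_pos hp.1 hq.1 hlog.1) (log_injOn_pos hp.2 hq.2 hlog.2)

/-- In logarithmic coordinates, the trace of the commutator is strictly convex
along every non-constant affine line in ℝ²; consequently it has a unique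
critical point on the open positive quadrant. -/
theorem commutator_trace_strictly_convex_unique_crit :
    (∀ u₀ v₀ b c : ℝ, ¬ (b = 0 ∧ c = 0) →
      StrictConvexOn ℝ Set.univ (fun t : ℝ =>
        commutatorTrace (Real.exp (u₀ + b*t)) (Real.exp (v₀ + c*t)))) ∧
    (∃! p : ℝ × ℝ, (0 < p.1 ∧ 0 < p.2) ∧
      fderiv ℝ (fun q : ℝ × ℝ => commutatorTrace q.1 q.2) p = 0) := by
  refine ⟨strictConvexOn_commutatorTrace_exp_line, ?_⟩
  obtain ⟨τ₀, hτ₀, hroot⟩ := exists_pos_eight_mul_sq_add_sub_one_eq_zero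
  have hcrit := fderiv_commutatorTrace_one_eq_zero hτ₀.ne' hroot
  refine ⟨(1, τ₀), ⟨⟨one_pos, hτ₀⟩, hcrit⟩, fun q ⟨hq, hqcrit⟩ => ?_⟩
  exact eq_of_fderiv_commutatorTrace_eq_zero hq ⟨one_pos, hτ₀⟩ hqcrit hcrit
end

section
/- For positive reals x, z, w define T(x) = [[0,0,1],[0,−1,−1],[x,1+x,1]] and E(z,w) = [[0,0,1/z],[0,−1,0],[w,0,0]]. For positive reals σ₁,…,σ₆, τ₁, τ₂, the matrix M_γ = T(τ₁)·E(σ₆,σ₅)·T(τ₂)·E(σ₁,σ₂) is lower triangular, and its diagonal entries d₁, d₂, d₃ (all nonzero) satisfy d₁/d₂ = σ₂σ₅ and d₂/d₃ = σ₁σ₆/(τ₁τ₂). -/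
/-- The unnormalized Fock–Goncharov triangle matrix T(x). -/
def Tmat (x : ℝ) : Matrix (Fin 3) (Fin 3) ℝ :=
  !![0, 0, 1; 0, -1, -1; x, 1 + x, 1]

/-- The unnormalized Fock–Goncharov edge matrix E(z,w). -/
noncomputable def Emat (z w : ℝ) : Matrix (Fin 3) (Fin 3) ℝ :=
  !![0, 0, 1/z; 0, -1, 0; w, 0, 0]

/-- The holonomy matrix of the boundary curve γ,
M_γ = T(τ₁)·E(σ₆,σ₅)·T(τ₂)·E(σ₁,σ₂), is lower triangular with nonzero diagonal
entries d₁,d₂,d₃ satisfying d₁/d₂ = σ₂σ₅ and d₂/d₃ = σ₁σ₆/(τ₁τ₂). -/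
theorem holonomy_gamma_triangular
    (σ1 σ2 σ3 σ4 σ5 σ6 τ1 τ2 : ℝ)
    (h1 : 0 < σ1) (h2 : 0 < σ2) (h3 : 0 < σ3) (h4 : 0 < σ4)
    (h5 : 0 < σ5) (h6 : 0 < σ6) (h7 : 0 < τ1) (h8 : 0 < τ2)
    (M : Matrix (Fin 3) (Fin 3) ℝ)
    (hM : M = Tmat τ1 * Emat σ6 σ5 * Tmat τ2 * Emat σ1 σ2) :
    (M 0 1 = 0 ∧ M 0 2 = 0 ∧ M 1 2 = 0) ∧
    (M 0 0 ≠ 0 ∧ M 1 1 ≠ 0 ∧ M 2 2 ≠ 0) ∧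
    M 0 0 / M 1 1 = σ2 * σ5 ∧
    M 1 1 / M 2 2 = σ1 * σ6 / (τ1 * τ2) := by
  have e00 : M 0 0 = σ2 * σ5 := by
    subst hM; simp [Tmat, Emat, Matrix.mul_apply, Fin.sum_univ_three, Matrix.vecHead, Matrix.vecTail]; ring
  have e11 : M 1 1 = 1 := by
    subst hM; simp [Tmat, Emat, Matrix.mul_apply, Fin.sum_univ_three, Matrix.vecHead, Matrix.vecTail]
  have e22 : M 2 2 = τ1 * τ2 / (σ1 * σ6) := by
    subst hM
    simp [Tmat, Emat, Matrix.mul_apply, Fin.sum_univ_three, Matrix.vecHead, Matrix.vecTail]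
    field_simp
  refine ⟨⟨?_, ?_, ?_⟩, ⟨?_, ?_, ?_⟩, ?_, ?_⟩
  · subst hM; simp [Tmat, Emat, Matrix.mul_apply, Fin.sum_univ_three, Matrix.vecHead, Matrix.vecTail]
  · subst hM; simp [Tmat, Emat, Matrix.mul_apply, Fin.sum_univ_three, Matrix.vecHead, Matrix.vecTail]
  · subst hM; simp [Tmat, Emat, Matrix.mul_apply, Fin.sum_univ_three, Matrix.vecHead, Matrix.vecTail]
  · rw [e00]; positivity
  · rw [e11]; norm_num
  · rw [e22]; positivity
  · rw [e00, e11]; simp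
  · rw [e11, e22]
    rw [one_div_div]
end

section
/- For positive reals x, z, w define T(x) = [[0,0,1],[0,−1,−1],[x,1+x,1]] and E(z,w) = [[0,0,1/z],[0,−1,0],[w,0,0]]; note T(x) and E(z,w) are invertible (det T(x) = x, det E(z,w) = w/z). For all positive reals σ₁,…,σ₆, τ₁, τ₂, set M_α = E(σ₂,σ₁)T(τ₂)E(σ₃,σ₄)T(τ₁), M_β = T(τ₁)⁻¹E(σ₄,σ₃)T(τ₂)E(σ₅,σ₆)T(τ₁)⁻¹, M_γ = T(τ₁)E(σ₆,σ₅)T(τ₂)E(σ₁,σ₂). Then the product M_α·M_β·M_γ is a nonzero scalar multiple of the 3×3 identity matrix. -/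
theorem det_Tmat (x : ℝ) : (Tmat x).det = x := by
  simp [Tmat, Matrix.det_fin_three]

theorem Tmat_pow_three (x : ℝ) : Tmat x ^ 3 = x • (1 : Matrix (Fin 3) (Fin 3) ℝ) := by
  rw [pow_three, Tmat, Matrix.mul_fin_three, Matrix.mul_fin_three, Matrix.one_fin_three,
    Matrix.smul_of, Matrix.smul_cons]
  ext i j
  fin_cases i <;> fin_cases j <;> simp <;> ring

theorem Tmat_mul_Tmat_mul_Tmat_mul (x : ℝ) (A : Matrix (Fin 3) (Fin 3) ℝ) :
    Tmat x * (Tmat x * (Tmat x * A)) = x • A := by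
  rw [← Matrix.mul_assoc, ← Matrix.mul_assoc, ← pow_three', Tmat_pow_three, Matrix.smul_mul,
    Matrix.one_mul]

theorem Emat_mul_Emat_swap {z w : ℝ} (hz : z ≠ 0) (hw : w ≠ 0) : Emat z w * Emat w z = 1 := by
  rw [Emat, Emat, Matrix.mul_fin_three, Matrix.one_fin_three]
  ext i j
  fin_cases i <;> fin_cases j <;> simp [hz, hw]

theorem Emat_mul_Emat_swap_mul {z w : ℝ} (hz : z ≠ 0) (hw : w ≠ 0)
    (A : Matrix (Fin 3) (Fin 3) ℝ) : Emat z w * (Emat w z * A) = A := by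
  rw [← Matrix.mul_assoc, Emat_mul_Emat_swap hz hw, Matrix.one_mul]

/-- The product of the three boundary holonomy matrices M_α·M_β·M_γ is a
nonzero scalar multiple of the identity, reflecting the relation αβγ = 1 in
π₁ of the pair of pants (the holonomies are in PSL(3,ℝ)). -/
theorem holonomy_product_scalar
    (σ1 σ2 σ3 σ4 σ5 σ6 τ1 τ2 : ℝ)
    (h1 : 0 < σ1) (h2 : 0 < σ2) (h3 : 0 < σ3) (h4 : 0 < σ4)
    (h5 : 0 < σ5) (h6 : 0 < σ6) (h7 : 0 < τ1) (h8 : 0 < τ2) :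
    ∃ c : ℝ, c ≠ 0 ∧
      (Emat σ2 σ1 * Tmat τ2 * Emat σ3 σ4 * Tmat τ1) *
      ((Tmat τ1)⁻¹ * Emat σ4 σ3 * Tmat τ2 * Emat σ5 σ6 * (Tmat τ1)⁻¹) *
      (Tmat τ1 * Emat σ6 σ5 * Tmat τ2 * Emat σ1 σ2)
        = c • (1 : Matrix (Fin 3) (Fin 3) ℝ) := by
  have hT : IsUnit (Tmat τ1).det := by simpa [det_Tmat] using h7.ne'
  refine ⟨τ2, h8.ne', ?_⟩
  simp only [Matrix.mul_assoc, Matrix.mul_nonsing_inv_cancel_left _ _ hT,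
    Matrix.nonsing_inv_mul_cancel_left _ _ hT,
    Emat_mul_Emat_swap_mul h3.ne' h4.ne', Emat_mul_Emat_swap_mul h5.ne' h6.ne',
    Tmat_mul_Tmat_mul_Tmat_mul]
  rw [Matrix.mul_smul, Emat_mul_Emat_swap h2.ne' h1.ne']
end
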